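/- For real s < 0, ∫_0^∞ y^{1-s}/sinh²(π y) dy = (2π)^{s-2} · 4(1-s) Γ(1-s) ζ(1-s). -/

import Mathlib

/-!
Expanding `1 / sinh² x = 4 ∑_{n ≥ 1} n e^{-2nx}` (the differentiated geometric series in `e^{-2x}`)
and integrating against `y^σ` term by term, each term is a Gamma integral
`∫ y^σ e^{-2cny} dy = Γ(σ + 1) (2cn)^{-(σ + 1)}`. The terms are nonnegative, so the interchange is
justified as soon as the resulting series `∑ n^{-σ}` converges, i.e. for `σ = 1 - s > 1`.
-/

open Real MeasureTheory Set

lemma hasSum_mul_exp_neg_eq_inv_sinh_sq {x : ℝ} (hx : 0 < x) :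
    HasSum (fun n : ℕ => 4 * ((n : ℝ) + 1) * exp (-(2 * ((n : ℝ) + 1) * x))) (sinh x ^ 2)⁻¹ := by
  set r := exp (-(2 * x))
  have hr0 : 0 < r := exp_pos _
  have hr1 : r < 1 := exp_lt_one_iff.mpr (by linarith)
  have hpow (n : ℕ) : exp (-(2 * ((n : ℝ) + 1) * x)) = r ^ (n + 1) := by
    rw [← exp_nat_mul]; push_cast; ring_nf
  have hsinh : (sinh x ^ 2)⁻¹ = 4 * (r / (1 - r) ^ 2) := by
    have hsinh_eq : sinh x = exp x * (1 - r) / 2 := by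
      rw [sinh_eq, mul_sub, ← exp_add]; ring_nf
    have hexp_sq : exp x ^ 2 * r = 1 := by
      rw [← exp_nat_mul, ← exp_add]; norm_num
    rw [hsinh_eq]
    field_simp [(sub_pos.mpr hr1).ne']
    linear_combination (-4 : ℝ) * hexp_sq
  have hgeo : HasSum (fun n : ℕ => ((n : ℝ) + 1) * r ^ (n + 1)) (r / (1 - r) ^ 2) := by
    have := hasSum_coe_mul_geometric_of_norm_lt_one (by rwa [norm_of_nonneg hr0.le])
    simpa using (hasSum_nat_add_iff' 1).mpr this
  rw [hsinh]
  simp_rw [hpow, mul_assoc]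
  exact hgeo.mul_left 4

lemma integrableOn_rpow_mul_exp_neg_mul {σ r : ℝ} (hσ : -1 < σ) (hr : 0 < r) :
    IntegrableOn (fun t : ℝ => t ^ σ * exp (-(r * t))) (Ioi 0) := by
  simpa using integrableOn_rpow_mul_exp_neg_mul_rpow hσ zero_lt_one hr

lemma integral_rpow_mul_exp_neg_mul_Ioi_eq_Gamma {σ r : ℝ} (hσ : -1 < σ) (hr : 0 < r) :
    ∫ t in Ioi 0, t ^ σ * exp (-(r * t)) = Gamma (σ + 1) * r ^ (-(σ + 1)) := by
  have := integral_rpow_mul_exp_neg_mul_Ioi (a := σ + 1) (by linarith) hr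
  rw [add_sub_cancel_right] at this
  rw [this, one_div, inv_rpow hr.le, ← rpow_neg hr.le, mul_comm]

theorem integral_rpow_div_sinh_sq {σ c : ℝ} (hσ : 1 < σ) (hc : 0 < c) :
    ∫ y in Ioi 0, y ^ σ / sinh (c * y) ^ 2 =
      4 * Gamma (σ + 1) * (2 * c) ^ (-(σ + 1)) * ∑' n : ℕ, ((n : ℝ) + 1) ^ (-σ) := by
  set F : ℕ → ℝ → ℝ := fun n y => 4 * ((n : ℝ) + 1) * (y ^ σ * exp (-(2 * ((n : ℝ) + 1) * c * y)))
  have hrate (n : ℕ) : 0 < 2 * ((n : ℝ) + 1) * c := by positivity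
  have hF_int (n : ℕ) : IntegrableOn (F n) (Ioi 0) :=
    (integrableOn_rpow_mul_exp_neg_mul (by linarith) (hrate n)).const_mul _
  have hF_integral (n : ℕ) : ∫ y in Ioi 0, F n y =
      4 * Gamma (σ + 1) * (2 * c) ^ (-(σ + 1)) * ((n : ℝ) + 1) ^ (-σ) := by
    have hn : (0 : ℝ) < n + 1 := by positivity
    rw [integral_const_mul, integral_rpow_mul_exp_neg_mul_Ioi_eq_Gamma (by linarith) (hrate n),
      show 2 * ((n : ℝ) + 1) * c = 2 * c * (n + 1) by ring, mul_rpow (by positivity) hn.le,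
      show -σ = -(σ + 1) + 1 by ring, rpow_add_one hn.ne']
    ring
  have hF_norm (n : ℕ) : ∫ y in Ioi 0, ‖F n y‖ = ∫ y in Ioi 0, F n y :=
    setIntegral_congr_fun measurableSet_Ioi fun y (hy : 0 < y) =>
      norm_of_nonneg (by positivity)
  have hsummable : Summable fun n : ℕ => ((n : ℝ) + 1) ^ (-σ) := by
    simpa using (summable_nat_add_iff 1).mpr (summable_nat_rpow.mpr (by linarith : -σ < -1))
  have hF_sum (y : ℝ) (hy : 0 < y) : ∑' n, F n y = y ^ σ / sinh (c * y) ^ 2 := by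
    rw [div_eq_mul_inv, ← ((hasSum_mul_exp_neg_eq_inv_sinh_sq (mul_pos hc hy)).mul_left _).tsum_eq]
    exact tsum_congr fun n => by simp only [F]; ring_nf
  have hinterchange := hasSum_integral_of_summable_integral_norm hF_int
    (by simpa only [hF_norm, hF_integral] using hsummable.mul_left _)
  rw [← setIntegral_congr_fun measurableSet_Ioi hF_sum, ← hinterchange.tsum_eq]
  simp only [hF_integral, tsum_mul_left]

theorem stmt_7 (s : ℝ) (hs : s < 0) :
    ∫ y in Set.Ioi (0 : ℝ), y ^ (1 - s) / (Real.sinh (π * y)) ^ 2 =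
      (2 * π) ^ (s - 2) * (4 * (1 - s) * Real.Gamma (1 - s) *
        ∑' n : ℕ, ((n : ℝ) + 1) ^ (-(1 - s))) := by
  rw [integral_rpow_div_sinh_sq (by linarith) pi_pos, Gamma_add_one (by linarith),
    show -(1 - s + 1) = s - 2 by ring]
  ring
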